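/- w* is a global minimizer of g(w) = (1/2)((1/2)‖w‖² − ν)² + (1/2)wᵀDw − ψᵀw if and only if ((1/2)‖w*‖² − ν)w* + Dw* − ψ = 0 and ‖w*‖² − 2ν + 2α₁ ≥ 0. -/

import Mathlib

/-!
With `t = ½‖w‖² - ν`, `r = t w + D w - ψ` and `h = v - w`, the objective expands exactly as
`g v - g w = ⟪r, h⟫ + ½ ∑ᵢ (t + αᵢ) hᵢ² + ½ (½‖h‖² + ⟪w, h⟫)²`.
If both conditions hold, every term on the right is nonnegative. Conversely, along a coordinate
line `v = w + s eᵢ` the difference is `rᵢ s + ½ s² (t + αᵢ + (s/2 + wᵢ)²)`: minimality at `s = 0`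
forces `rᵢ = 0`, and then `t + αᵢ + (s/2 + wᵢ)² ≥ 0` for all `s ≠ 0`, hence by continuity at
`s = -2 wᵢ`, where the square vanishes.
-/

open Finset

theorem eq_zero_of_forall_nonneg_add_sq_mul {a : ℝ} {q : ℝ → ℝ} (hq : Differentiable ℝ q)
    (h : ∀ s, 0 ≤ a * s + s^2 * q s) : a = 0 := by
  have hmin : IsLocalMin (fun s => a * s + s^2 * q s) 0 :=
    Filter.Eventually.of_forall fun s => by simpa using h s
  have hderiv : HasDerivAt (fun s => a * s + s^2 * q s)
      (a * 1 + ((2 : ℕ) * 0 ^ 1 * q 0 + 0 ^ 2 * deriv q 0)) 0 :=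
    ((hasDerivAt_id' 0).const_mul a).add ((hasDerivAt_pow 2 0).mul (hq 0).hasDerivAt)
  norm_num at hderiv
  exact hmin.hasDerivAt_eq_zero hderiv

theorem nonneg_of_forall_ne_zero {f : ℝ → ℝ} (hf : Continuous f) (h : ∀ s ≠ 0, 0 ≤ f s) (x : ℝ) :
    0 ≤ f x := by
  have hsub : ({0}ᶜ : Set ℝ) ⊆ {s | 0 ≤ f s} := fun s hs => h s hs
  have := closure_minimal hsub (isClosed_le continuous_const hf)
  rw [(dense_compl_singleton (0:ℝ)).closure_eq] at this
  exact this (Set.mem_univ x)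

section QuarticObjective

variable {ι : Type*} [Fintype ι]

noncomputable def quarticObjective (α ψ : ι → ℝ) (ν : ℝ) (w : ι → ℝ) : ℝ :=
  (1/2) * ((1/2) * ∑ i, (w i)^2 - ν)^2 + (1/2) * ∑ i, α i * (w i)^2 - ∑ i, ψ i * w i

noncomputable def normShift (ν : ℝ) (w : ι → ℝ) : ℝ := (1/2) * ∑ j, (w j)^2 - ν

theorem quarticObjective_add (α ψ : ι → ℝ) (ν : ℝ) (w h : ι → ℝ) :
    quarticObjective α ψ ν (w + h) - quarticObjective α ψ ν w =
      ∑ i, (normShift ν w * w i + α i * w i - ψ i) * h i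
        + (1/2) * ∑ i, (normShift ν w + α i) * (h i)^2
        + (1/2) * ((1/2) * ∑ i, (h i)^2 + ∑ i, w i * h i)^2 := by
  have hsq : ∑ i, (w i + h i)^2 = ∑ i, (w i)^2 + 2 * ∑ i, w i * h i + ∑ i, (h i)^2 := by
    simp only [mul_sum, ← sum_add_distrib]; exact sum_congr rfl fun i _ => by ring
  have hα : ∑ i, α i * (w i + h i)^2
      = ∑ i, α i * (w i)^2 + 2 * ∑ i, α i * w i * h i + ∑ i, α i * (h i)^2 := by
    simp only [mul_sum, ← sum_add_distrib]; exact sum_congr rfl fun i _ => by ring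
  have hψ : ∑ i, ψ i * (w i + h i) = ∑ i, ψ i * w i + ∑ i, ψ i * h i := by
    simp only [← sum_add_distrib]; exact sum_congr rfl fun i _ => by ring
  have hlin : ∑ i, (normShift ν w * w i + α i * w i - ψ i) * h i
      = normShift ν w * ∑ i, w i * h i + ∑ i, α i * w i * h i - ∑ i, ψ i * h i := by
    simp only [mul_sum, ← sum_add_distrib, ← sum_sub_distrib]; exact sum_congr rfl fun i _ => by ring
  have hquad : ∑ i, (normShift ν w + α i) * (h i)^2
      = normShift ν w * ∑ i, (h i)^2 + ∑ i, α i * (h i)^2 := by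
    simp only [mul_sum, ← sum_add_distrib]; exact sum_congr rfl fun i _ => by ring
  rw [hlin, hquad]
  simp only [quarticObjective, Pi.add_apply, hsq, hα, hψ, normShift]
  ring

theorem quarticObjective_add_single [DecidableEq ι] (α ψ : ι → ℝ) (ν : ℝ) (w : ι → ℝ) (i : ι)
    (s : ℝ) :
    quarticObjective α ψ ν (w + Pi.single i s) - quarticObjective α ψ ν w =
      (normShift ν w * w i + α i * w i - ψ i) * s
        + s^2 * ((1/2) * (normShift ν w + α i + (s/2 + w i)^2)) := by
  rw [quarticObjective_add]
  simp only [Pi.single_apply, mul_ite, mul_zero, sum_ite_eq', mem_univ, ↓reduceIte, ite_pow, ne_eq,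
    OfNat.ofNat_ne_zero, not_false_eq_true, zero_pow]
  ring

theorem forall_quarticObjective_le_iff (α ψ : ι → ℝ) (ν : ℝ) (w : ι → ℝ) :
    (∀ v, quarticObjective α ψ ν w ≤ quarticObjective α ψ ν v) ↔
      (∀ i, normShift ν w * w i + α i * w i - ψ i = 0) ∧ ∀ i, 0 ≤ normShift ν w + α i := by
  classical
  constructor
  · intro hmin
    have hline : ∀ i s, 0 ≤ (normShift ν w * w i + α i * w i - ψ i) * s
        + s^2 * ((1/2) * (normShift ν w + α i + (s/2 + w i)^2)) := fun i s => by
      rw [← quarticObjective_add_single, sub_nonneg]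
      exact hmin _
    have hgrad : ∀ i, normShift ν w * w i + α i * w i - ψ i = 0 := fun i =>
      eq_zero_of_forall_nonneg_add_sq_mul (by fun_prop) (hline i)
    refine ⟨hgrad, fun i => ?_⟩
    have hcurv := nonneg_of_forall_ne_zero (f := fun s => normShift ν w + α i + (s/2 + w i)^2)
      (by fun_prop) (fun s hs => ?_) (-2 * w i)
    · convert hcurv using 1
      ring
    · have := hline i s
      rw [hgrad i, zero_mul, zero_add, mul_nonneg_iff_of_pos_left (by positivity)] at this
      linarith
  · rintro ⟨hgrad, hcurv⟩ v
    have key := quarticObjective_add α ψ ν w (v - w)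
    simp only [add_sub_cancel, Pi.sub_apply, hgrad, zero_mul, sum_const_zero, zero_add] at key
    rw [← sub_nonneg, key]
    have := sum_nonneg fun i (_ : i ∈ univ) => mul_nonneg (hcurv i) (sq_nonneg (v i - w i))
    positivity

end QuarticObjective

theorem stmt11 {n : ℕ} (hn : 1 ≤ n) (α ψ : Fin n → ℝ) (hα : Monotone α) (ν : ℝ)
    (g : (Fin n → ℝ) → ℝ)
    (hg : ∀ w, g w = (1/2) * ((1/2) * ∑ i, (w i)^2 - ν)^2
        + (1/2) * ∑ i, α i * (w i)^2 - ∑ i, ψ i * w i)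
    (w : Fin n → ℝ) :
    (∀ v, g w ≤ g v) ↔
      ((∀ i, ((1/2) * ∑ j, (w j)^2 - ν) * w i + α i * w i - ψ i = 0) ∧
        (∑ j, (w j)^2) - 2 * ν + 2 * α ⟨0, hn⟩ ≥ 0) := by
  obtain rfl : g = quarticObjective α ψ ν := funext hg
  rw [forall_quarticObjective_le_iff]
  refine and_congr Iff.rfl ⟨fun hcurv => ?_, fun h i => ?_⟩ <;> unfold normShift at *
  · linarith [hcurv ⟨0, hn⟩]
  · linarith [hα (show (⟨0, hn⟩ : Fin n) ≤ i from Nat.zero_le _)]
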